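/- Under the coupling where (I₁,...,Iₙ) are the first n distinct items of an i.i.d. sequence (J_k) with P(J₁=i)=ω(i), the conditional expectation of the time T_n of the n-th distinct item satisfies E[T_n | I₁,...,Iₙ] = Σ_{k=1}^{n} 1/(1-σ_{k-1}), where σ_{k-1} = ω(I₁)+...+ω(I_{k-1}). -/

import Mathlib

open scoped BigOperators
open MeasureTheory ProbabilityTheory

/-- Number of distinct items appearing among the first `t` draws `J 0, …, J (t-1)`. -/
def numDistinct (N : ℕ) (J : ℕ → Fin N) (t : ℕ) : ℕ :=
  ((Finset.range t).image J).card

/-- `hitTime N J k` is the (1-indexed) time at which the `k`-th distinct item appears. -/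
noncomputable def hitTime (N : ℕ) (J : ℕ → Fin N) (k : ℕ) : ℕ :=
  sInf {t | numDistinct N J t = k}

/-- `sampleWOR N J k` is the `k`-th (0-indexed) distinct item in the sequence `J`,
i.e. the `k`-th item of the induced sample without replacement. -/
noncomputable def sampleWOR (N : ℕ) (J : ℕ → Fin N) (k : ℕ) : Fin N :=
  J (hitTime N J (k + 1) - 1)

/-!
Suppose the first `n` distinct items are `i₀, …, i_{n-1}` and `T_n = t'`. Then the next distinct
item is `iₙ` and is drawn at time `t` (so `T_{n+1} = t + 1`) exactly when the draws
`J t', …, J (t - 1)` all lie in `{i₀, …, i_{n-1}}` and `J t = iₙ`; these draws are independent of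
the first `t'` ones. With `σ = ω(i₀) + ⋯ + ω(i_{n-1})`, the restriction of the law of `T_{n+1}` to
the event is therefore that of `T_n` delayed by a geometric waiting time of ratio `σ`, scaled by
`ω(iₙ)`. Summing geometric series, the mass of the event gets multiplied by `ω(iₙ) / (1 - σ)`,
and the integral of `T` over it is multiplied by the same factor and then increased by
`1 / (1 - σ)` times the new mass, because `∑ (g + 1) σ ^ g = (1 - σ)⁻²`. Induction on `n` gives
the formula.
-/

open Finset
open scoped ENNReal

section Deterministic

variable {N : ℕ} (f : ℕ → Fin N)

theorem numDistinct_zero : numDistinct N f 0 = 0 := by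
  simp [numDistinct]

theorem numDistinct_mono : Monotone (numDistinct N f) := fun _ _ h =>
  card_le_card (image_subset_image (range_subset_range.2 h))

theorem numDistinct_succ (t : ℕ) :
    numDistinct N f (t + 1) =
      numDistinct N f t + if f t ∈ (range t).image f then 0 else 1 := by
  rw [numDistinct, numDistinct, range_add_one, image_insert]
  split_ifs with h
  · rw [insert_eq_self.2 h, add_zero]
  · rw [card_insert_of_notMem h]

theorem image_range_eq_of_numDistinct_eq {t' t : ℕ} (h : t' ≤ t)
    (hnd : numDistinct N f t = numDistinct N f t') :
    (range t).image f = (range t').image f :=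
  (eq_of_subset_of_card_le (image_subset_image (range_subset_range.2 h)) hnd.le).symm

theorem image_range_eq_iff {t' t : ℕ} (h : t' ≤ t) :
    (range t).image f = (range t').image f ↔ ∀ s ∈ Ico t' t, f s ∈ (range t').image f := by
  refine ⟨fun heq s hs => heq ▸ mem_image_of_mem f (mem_range.2 (mem_Ico.1 hs).2),
    fun hstay => ?_⟩
  induction t, h using Nat.le_induction with
  | base => rfl
  | succ t ht ih =>
    rw [range_add_one, image_insert, ih fun s hs => hstay s (Ico_subset_Ico_right t.le_succ hs)]
    exact insert_eq_self.2 (hstay t (mem_Ico.2 ⟨ht, t.lt_succ_self⟩))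

theorem hitTime_zero : hitTime N f 0 = 0 :=
  Nat.sInf_eq_zero.2 (Or.inl (numDistinct_zero f))

theorem hitTime_eq_zero_of_forall_ne {k : ℕ} (h : ∀ t, numDistinct N f t ≠ k) :
    hitTime N f k = 0 :=
  Nat.sInf_eq_zero.2 (Or.inr (Set.eq_empty_of_forall_notMem h))

theorem numDistinct_hitTime {k : ℕ} (h : ∃ t, numDistinct N f t = k) :
    numDistinct N f (hitTime N f k) = k :=
  Nat.sInf_mem h

theorem hitTime_le {k t : ℕ} (h : numDistinct N f t = k) : hitTime N f k ≤ t :=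
  Nat.sInf_le h

theorem hitTime_eq_succ_iff {k t : ℕ} :
    hitTime N f k = t + 1 ↔ numDistinct N f (t + 1) = k ∧ numDistinct N f t < k := by
  constructor
  · intro h
    have hk : ∃ s, numDistinct N f s = k := by
      by_contra hk
      rw [hitTime_eq_zero_of_forall_ne f (not_exists.1 hk)] at h
      omega
    have hnd := numDistinct_hitTime f hk
    rw [h] at hnd
    refine ⟨hnd, lt_of_le_of_ne (hnd ▸ numDistinct_mono f t.le_succ) fun ht => ?_⟩
    have := hitTime_le f ht
    omega
  · rintro ⟨hnd, hlt⟩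
    refine le_antisymm (hitTime_le f hnd) (Nat.succ_le_of_lt (lt_of_not_ge fun hle => ?_))
    have := numDistinct_mono f hle
    rw [numDistinct_hitTime f ⟨_, hnd⟩] at this
    omega

theorem hitTime_succ_eq_succ_iff {k t : ℕ} :
    hitTime N f (k + 1) = t + 1 ↔ numDistinct N f t = k ∧ f t ∉ (range t).image f := by
  rw [hitTime_eq_succ_iff, numDistinct_succ]
  by_cases h : f t ∈ (range t).image f <;> simp only [h, if_true, if_false, not_true,
    not_false_iff, and_false, and_true, iff_false] <;> omega

theorem sampleWOR_eq_of_hitTime_eq {k t : ℕ} (h : hitTime N f (k + 1) = t + 1) :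
    sampleWOR N f k = f t := by
  rw [sampleWOR, h, Nat.add_sub_cancel]

theorem hitTime_one : hitTime N f 1 = 1 :=
  (hitTime_succ_eq_succ_iff f).2 ⟨numDistinct_zero f, by simp⟩

theorem exists_hitTime_eq_succ {k : ℕ} (h : ∃ t, numDistinct N f t = k + 1) :
    ∃ t, hitTime N f (k + 1) = t + 1 := by
  refine Nat.exists_eq_add_one.2 (Nat.pos_of_ne_zero fun h0 => ?_)
  have := numDistinct_hitTime f h
  rw [h0, numDistinct_zero] at this
  omega

theorem image_range_hitTime {k : ℕ} (h : ∃ t, numDistinct N f t = k) :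
    (range (hitTime N f k)).image f = (range k).image (sampleWOR N f) := by
  induction k with
  | zero => simp [hitTime_zero]
  | succ k ih =>
    obtain ⟨t, ht⟩ := exists_hitTime_eq_succ f h
    obtain ⟨hnd, -⟩ := (hitTime_succ_eq_succ_iff f).1 ht
    have hk : numDistinct N f (hitTime N f k) = k := numDistinct_hitTime f ⟨t, hnd⟩
    rw [ht, range_add_one, image_insert,
      image_range_eq_of_numDistinct_eq f (hitTime_le f hnd) (hnd.trans hk.symm), ih ⟨t, hnd⟩,
      range_add_one, image_insert, sampleWOR_eq_of_hitTime_eq f ht]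

end Deterministic

section Pattern

variable {N : ℕ} (f : ℕ → Fin N) {ii : ℕ → Fin N} {n : ℕ}

theorem exists_numDistinct_eq_of_sampleWOR (hii : Set.InjOn ii (Set.Iio n))
    (h : ∀ k < n, sampleWOR N f k = ii k) : ∃ t, numDistinct N f t = n := by
  by_contra hn
  have hzero := hitTime_eq_zero_of_forall_ne f (not_exists.1 hn)
  obtain _ | k := n
  · exact hn ⟨0, numDistinct_zero f⟩
  -- with fewer than `k + 1` distinct items `hitTime` defaults to `0`, so
  -- `sampleWOR N f k = f 0 = sampleWOR N f 0`
  have hk : ii k = ii 0 := by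
    rw [← h k k.lt_succ_self, ← h 0 k.succ_pos, sampleWOR, hzero,
      sampleWOR_eq_of_hitTime_eq f (hitTime_one f)]
  obtain rfl : k = 0 := hii (Set.mem_Iio.2 k.lt_succ_self) (Set.mem_Iio.2 k.succ_pos) hk
  exact absurd (hitTime_one f) (by rw [hzero]; decide)

theorem image_range_hitTime_of_sampleWOR (hii : Set.InjOn ii (Set.Iio n))
    (h : ∀ k < n, sampleWOR N f k = ii k) :
    (range (hitTime N f n)).image f = (range n).image ii := by
  rw [image_range_hitTime f (exists_numDistinct_eq_of_sampleWOR f hii h)]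
  exact image_congr fun k hk => h k (mem_range.1 hk)

theorem sampleWOR_and_hitTime_succ_iff (hii : Set.InjOn ii (Set.Iio (n + 1))) {t : ℕ} :
    ((∀ k < n + 1, sampleWOR N f k = ii k) ∧ hitTime N f (n + 1) = t + 1) ↔
      ∃ t' ≤ t, ((∀ k < n, sampleWOR N f k = ii k) ∧ hitTime N f n = t') ∧
        (∀ s ∈ Ico t' t, f s ∈ (range n).image ii) ∧ f t = ii n := by
  have hii' : Set.InjOn ii (Set.Iio n) := hii.mono (Set.Iio_subset_Iio n.le_succ)
  constructor
  · rintro ⟨hpat, ht⟩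
    obtain ⟨hnd, -⟩ := (hitTime_succ_eq_succ_iff f).1 ht
    have hpat' : ∀ k < n, sampleWOR N f k = ii k := fun k hk => hpat k (by omega)
    have hle : hitTime N f n ≤ t := hitTime_le f hnd
    refine ⟨_, hle, ⟨hpat', rfl⟩, ?_, ?_⟩
    · rw [← image_range_hitTime_of_sampleWOR f hii' hpat']
      refine (image_range_eq_iff f hle).1 (image_range_eq_of_numDistinct_eq f hle ?_)
      rw [hnd, numDistinct_hitTime f ⟨t, hnd⟩]
    · rw [← sampleWOR_eq_of_hitTime_eq f ht]
      exact hpat n n.lt_succ_self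
  · rintro ⟨t', hle, ⟨hpat, rfl⟩, hstay, hlast⟩
    have himage := image_range_hitTime_of_sampleWOR f hii' hpat
    have hrange : (range t).image f = (range n).image ii := by
      rw [← himage] at hstay ⊢
      exact (image_range_eq_iff f hle).2 hstay
    have hnew : f t ∉ (range t).image f := by
      rw [hrange, hlast]
      simp only [mem_image, mem_range, not_exists, not_and]
      exact fun k hk heq =>
        hk.ne (hii (Set.mem_Iio.2 (by omega)) (Set.mem_Iio.2 n.lt_succ_self) heq)
    have hnd : numDistinct N f t = n := by
      rw [numDistinct, hrange, card_image_of_injOn (by rwa [coe_range]), card_range]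
    have ht := (hitTime_succ_eq_succ_iff f).2 ⟨hnd, hnew⟩
    refine ⟨fun k hk => ?_, ht⟩
    rcases Nat.lt_succ_iff_lt_or_eq.1 hk with hk | rfl
    · exact hpat k hk
    · rw [sampleWOR_eq_of_hitTime_eq f ht, hlast]

end Pattern

section GeometricDelay

theorem ENNReal.tsum_mul_tsum_eq_tsum_sum_antidiagonal (f g : ℕ → ℝ≥0∞) :
    (∑' n, f n) * ∑' n, g n = ∑' n, ∑ kl ∈ antidiagonal n, f kl.1 * g kl.2 := by
  rw [← ENNReal.tsum_mul_right]
  simp_rw [← ENNReal.tsum_mul_left]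
  rw [← ENNReal.tsum_prod (f := fun a b => f a * g b),
    ← HasAntidiagonal.sigmaAntidiagonalEquivProd.tsum_eq, ENNReal.tsum_sigma']
  refine tsum_congr fun n => ?_
  rw [← Finset.tsum_subtype]
  rfl

theorem ENNReal.tsum_natCast_add_one_mul_pow (r : ℝ≥0∞) :
    ∑' b : ℕ, ((b : ℝ≥0∞) + 1) * r ^ b = (1 - r)⁻¹ ^ 2 := by
  rw [sq, ← ENNReal.tsum_geometric, ENNReal.tsum_mul_tsum_eq_tsum_sum_antidiagonal]
  refine tsum_congr fun t => ?_
  rw [sum_congr rfl fun x hx => (pow_add r x.1 x.2).symm.trans (by rw [mem_antidiagonal.1 hx]),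
    sum_const, Nat.card_antidiagonal, nsmul_eq_mul, Nat.cast_add_one]

variable {p q : ℕ → ℝ≥0∞} {r c : ℝ≥0∞}

theorem tsum_eq_of_geometric_delay (h0 : q 0 = 0)
    (hq : ∀ t, q (t + 1) = c * ∑ x ∈ antidiagonal t, p x.1 * r ^ x.2) :
    ∑' t, q t = c * (1 - r)⁻¹ * ∑' t, p t := by
  rw [tsum_eq_zero_add' ENNReal.summable, h0, zero_add, tsum_congr hq, ENNReal.tsum_mul_left,
    ← ENNReal.tsum_mul_tsum_eq_tsum_sum_antidiagonal, ENNReal.tsum_geometric]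
  ring

theorem tsum_natCast_mul_eq_of_geometric_delay (h0 : q 0 = 0)
    (hq : ∀ t, q (t + 1) = c * ∑ x ∈ antidiagonal t, p x.1 * r ^ x.2) :
    ∑' t : ℕ, (t : ℝ≥0∞) * q t =
      c * (1 - r)⁻¹ * ∑' t : ℕ, (t : ℝ≥0∞) * p t +
        c * (1 - r)⁻¹ ^ 2 * ∑' t, p t := by
  -- split the delay `t + 1 = a + (b + 1)` into the two Cauchy products
  have hsplit : ∀ t, ((t + 1 : ℕ) : ℝ≥0∞) * q (t + 1) =
      c * (∑ x ∈ antidiagonal t, (x.1 : ℝ≥0∞) * p x.1 * r ^ x.2 +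
        ∑ x ∈ antidiagonal t, p x.1 * (((x.2 : ℝ≥0∞) + 1) * r ^ x.2)) := by
    intro t
    rw [hq, ← sum_add_distrib, mul_left_comm, mul_sum]
    refine congrArg _ (sum_congr rfl fun x hx => ?_)
    rw [← mem_antidiagonal.1 hx]
    push_cast
    ring
  rw [tsum_eq_zero_add' ENNReal.summable, h0, mul_zero, zero_add, tsum_congr hsplit,
    ENNReal.tsum_mul_left, ENNReal.tsum_add,
    ← ENNReal.tsum_mul_tsum_eq_tsum_sum_antidiagonal (fun a => (a : ℝ≥0∞) * p a),
    ← ENNReal.tsum_mul_tsum_eq_tsum_sum_antidiagonal p (fun b => ((b : ℝ≥0∞) + 1) * r ^ b),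
    ENNReal.tsum_geometric, ENNReal.tsum_natCast_add_one_mul_pow]
  ring

end GeometricDelay

section Draws

variable {N : ℕ}

theorem measurable_numDistinct (t : ℕ) :
    Measurable fun f : ℕ → Fin N => numDistinct N f t := by
  have h : (fun f : ℕ → Fin N => numDistinct N f t) =
      (fun g : range t → Fin N => (univ.image g).card) ∘ (range t).restrict := by
    ext f
    simp only [numDistinct, Function.comp_apply, univ_eq_attach]
    congr 1
    ext a
    simp
  rw [h]
  exact (measurable_of_countable _).comp ((range t).measurable_restrict)

theorem measurable_hitTime (k : ℕ) : Measurable fun f : ℕ → Fin N => hitTime N f k := by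
  refine measurable_to_countable' fun t => ?_
  cases t with
  | zero =>
    have h : (fun f : ℕ → Fin N => hitTime N f k) ⁻¹' {0} =
        {f | numDistinct N f 0 = k} ∪ ⋂ s, {f | numDistinct N f s ≠ k} := by
      ext f
      simp [hitTime, Nat.sInf_eq_zero, Set.eq_empty_iff_forall_notMem]
    rw [h]
    exact (measurable_numDistinct 0 (measurableSet_singleton k)).union
      (.iInter fun s => (measurable_numDistinct s (measurableSet_singleton k)).compl)
  | succ t =>
    have h : (fun f : ℕ → Fin N => hitTime N f k) ⁻¹' {t + 1} =
        {f | numDistinct N f (t + 1) = k} ∩ {f | numDistinct N f t < k} := by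
      ext f
      exact hitTime_eq_succ_iff f
    rw [h]
    exact (measurable_numDistinct (t + 1) (measurableSet_singleton k)).inter
      (measurableSet_lt (measurable_numDistinct t) measurable_const)

end Draws

section Events

variable {Ω : Type*} {N : ℕ} (J : ℕ → Ω → Fin N) (ii : ℕ → Fin N)

def sampleEvent (n t : ℕ) : Set Ω :=
  {x | (∀ k < n, sampleWOR N (fun s => J s x) k = ii k) ∧ hitTime N (fun s => J s x) n = t}

theorem sampleEvent_zero (t : ℕ) : sampleEvent J ii 0 t = {_x | 0 = t} := by
  simp [sampleEvent, hitTime_zero]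

variable {ii} {n : ℕ}

theorem sampleEvent_succ_zero (hii : Set.InjOn ii (Set.Iio (n + 1))) :
    sampleEvent J ii (n + 1) 0 = ∅ := by
  refine Set.eq_empty_of_forall_notMem fun x ⟨hpat, ht⟩ => ?_
  obtain ⟨t, ht'⟩ := exists_hitTime_eq_succ _ (exists_numDistinct_eq_of_sampleWOR _ hii hpat)
  omega

theorem sampleEvent_succ_succ (hii : Set.InjOn ii (Set.Iio (n + 1))) (t : ℕ) :
    sampleEvent J ii (n + 1) (t + 1) =
      ⋃ t' ∈ range (t + 1), sampleEvent J ii n t' ∩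
        (⋂ s ∈ Ico t' t, J s ⁻¹' ↑((range n).image ii)) ∩
          {x | J t x = ii n} := by
  ext x
  rw [sampleEvent, Set.mem_ofPred_eq, sampleWOR_and_hitTime_succ_iff _ hii]
  simp only [sampleEvent, Set.mem_ofPred_eq, Set.mem_iUnion, Set.mem_inter_iff, Set.mem_iInter,
    Set.mem_preimage, mem_coe, mem_range, Nat.lt_succ_iff, exists_prop,
    and_assoc]

theorem pairwiseDisjoint_sampleEvent : Pairwise (Function.onFun Disjoint (sampleEvent J ii n)) :=
  fun _ _ hne => Set.disjoint_left.2 fun _ ha hb => hne (ha.2.symm.trans hb.2)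

theorem iUnion_sampleEvent :
    ⋃ t, sampleEvent J ii n t = {x | ∀ k < n, sampleWOR N (fun s => J s x) k = ii k} := by
  ext x
  simp [sampleEvent]

theorem measurableSet_preimage_iSup_comap {S : Set ℕ} {s : ℕ} (hs : s ∈ S) (A : Set (Fin N)) :
    MeasurableSet[⨆ s ∈ S, MeasurableSpace.comap (J s) inferInstance] (J s ⁻¹' A) :=
  le_iSup₂ (f := fun s (_ : s ∈ S) => MeasurableSpace.comap (J s) inferInstance) s hs _
    ⟨A, .of_discrete, rfl⟩

theorem measurableSet_sampleEvent (hii : Set.InjOn ii (Set.Iio n)) {t u : ℕ} (htu : t ≤ u) :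
    MeasurableSet[⨆ s ∈ Set.Iio u, MeasurableSpace.comap (J s) inferInstance]
      (sampleEvent J ii n t) := by
  induction n generalizing t u with
  | zero => rw [sampleEvent_zero]; exact MeasurableSet.const _
  | succ n ih =>
    cases t with
    | zero => rw [sampleEvent_succ_zero J hii]; exact MeasurableSpace.measurableSet_empty _
    | succ t =>
      rw [sampleEvent_succ_succ J hii]
      refine measurableSet_biUnion _ fun t' ht' => .inter (.inter ?_ ?_) ?_
      · exact ih (hii.mono (Set.Iio_subset_Iio n.le_succ)) ((mem_range.1 ht').le.trans htu)
      · exact measurableSet_biInter _ fun s hs => measurableSet_preimage_iSup_comap J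
          (Set.mem_Iio.2 ((mem_Ico.1 hs).2.trans_le (t.le_succ.trans htu))) _
      · exact measurableSet_preimage_iSup_comap J (Set.mem_Iio.2 htu) {ii n}

end Events

section Measures

variable {Ω : Type*} [MeasurableSpace Ω] {μ : Measure Ω} {N : ℕ} {J : ℕ → Ω → Fin N}
  {w : Fin N → ℝ≥0∞} {ii : ℕ → Fin N} {n : ℕ}

theorem iSup_comap_le (hJ : ∀ t, Measurable (J t)) (S : Set ℕ) :
    ⨆ s ∈ S, MeasurableSpace.comap (J s) inferInstance ≤ ‹MeasurableSpace Ω› :=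
  iSup₂_le fun s _ => (hJ s).comap_le

theorem ProbabilityTheory.iIndepFun.measure_inter_eq_mul (hJ : ∀ t, Measurable (J t))
    (hindep : iIndepFun J μ) {S T : Set ℕ} (hST : Disjoint S T) {A B : Set Ω}
    (hA : MeasurableSet[⨆ s ∈ S, MeasurableSpace.comap (J s) inferInstance] A)
    (hB : MeasurableSet[⨆ s ∈ T, MeasurableSpace.comap (J s) inferInstance] B) :
    μ (A ∩ B) = μ A * μ B :=
  (Indep_iff _ _ μ).1 (indep_iSup_of_disjoint (fun s => (hJ s).comap_le) hindep.iIndep hST)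
    A B hA hB

theorem measure_preimage_finset (hJ : ∀ t, Measurable (J t))
    (hlaw : ∀ t i, μ {x | J t x = i} = w i) (t : ℕ) (S : Finset (Fin N)) :
    μ (J t ⁻¹' S) = ∑ i ∈ S, w i := by
  rw [← sum_measure_preimage_singleton S fun i _ => hJ t (measurableSet_singleton i)]
  exact sum_congr rfl fun i _ => hlaw t i

theorem measure_sampleEvent_succ_succ (hJ : ∀ t, Measurable (J t)) (hindep : iIndepFun J μ)
    (hlaw : ∀ t i, μ {x | J t x = i} = w i) (hii : Set.InjOn ii (Set.Iio (n + 1))) (t : ℕ) :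
    μ (sampleEvent J ii (n + 1) (t + 1)) = w (ii n) * ∑ x ∈ antidiagonal t,
      μ (sampleEvent J ii n x.1) * (∑ m ∈ range n, w (ii m)) ^ x.2 := by
  have hii' : Set.InjOn ii (Set.Iio n) := hii.mono (Set.Iio_subset_Iio n.le_succ)
  have hD : MeasurableSet[⨆ s ∈ ({t} : Set ℕ), MeasurableSpace.comap (J s) inferInstance]
      {x | J t x = ii n} := measurableSet_preimage_iSup_comap J (Set.mem_singleton t) {ii n}
  have hEC : ∀ t' ≤ t,
      MeasurableSet[⨆ s ∈ Set.Iio t, MeasurableSpace.comap (J s) inferInstance]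
        (sampleEvent J ii n t' ∩ ⋂ s ∈ Ico t' t, J s ⁻¹' ↑((range n).image ii)) :=
    fun t' ht' => (measurableSet_sampleEvent J hii' ht').inter (measurableSet_biInter _ fun s hs =>
      measurableSet_preimage_iSup_comap J (Set.mem_Iio.2 (mem_Ico.1 hs).2) _)
  rw [sampleEvent_succ_succ J hii, measure_biUnion_finset ?disj ?meas,
    Nat.sum_antidiagonal_eq_sum_range_succ (fun a b => μ (sampleEvent J ii n a) *
      (∑ m ∈ range n, w (ii m)) ^ b), mul_sum]
  case disj =>
    exact fun a _ b _ hab => ((pairwiseDisjoint_sampleEvent J hab).mono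
      (Set.inter_subset_left.trans Set.inter_subset_left)
      (Set.inter_subset_left.trans Set.inter_subset_left))
  case meas =>
    exact fun t' ht' => (iSup_comap_le hJ _ _ (hEC t' (Nat.lt_succ_iff.1 (mem_range.1 ht')))).inter
      (iSup_comap_le hJ _ _ hD)
  refine sum_congr rfl fun t' ht' => ?_
  have ht' : t' ≤ t := Nat.lt_succ_iff.1 (mem_range.1 ht')
  rw [hindep.measure_inter_eq_mul hJ (by simp) (hEC t' ht') hD,
    hindep.measure_inter_eq_mul hJ (S := Set.Iio t') (T := Ico t' t)
      (Set.disjoint_left.2 fun s hs hs' => (mem_Ico.1 hs').1.not_gt hs)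
      (measurableSet_sampleEvent J hii' le_rfl)
      (measurableSet_biInter _ fun s hs => measurableSet_preimage_iSup_comap J (mem_coe.2 hs) _),
    hindep.meas_biInter fun s _ => ⟨_, .of_discrete, rfl⟩, prod_congr rfl fun s _ =>
      measure_preimage_finset hJ hlaw s _, prod_const, Nat.card_Ico,
      sum_image fun a ha b hb => hii' (mem_range.1 ha) (mem_range.1 hb), hlaw]
  ring

end Measures

section Main

theorem ENNReal.sum_range_lt_one_of_injOn {α : Type*} [Fintype α] {w : α → ℝ≥0∞}
    (hw : ∀ a, w a ≠ 0) (hsum : ∑ a, w a = 1) {ii : ℕ → α} {k : ℕ}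
    (hii : Set.InjOn ii (Set.Iio (k + 1))) : ∑ m ∈ range k, w (ii m) < 1 := by
  classical
  have hle : ∑ m ∈ range (k + 1), w (ii m) ≤ 1 := by
    rw [← hsum, ← sum_image fun a ha b hb => hii (mem_range.1 ha) (mem_range.1 hb)]
    exact sum_le_univ_sum_of_nonneg fun _ => bot_le
  rw [sum_range_succ] at hle
  exact (ENNReal.lt_add_right (ne_top_of_le_ne_top one_ne_top (le_self_add.trans hle))
    (hw _)).trans_le hle

variable {Ω : Type*} [MeasurableSpace Ω] {μ : Measure Ω} {N : ℕ} {J : ℕ → Ω → Fin N}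
  {w : Fin N → ℝ≥0∞} {ii : ℕ → Fin N} {n : ℕ}

theorem tsum_natCast_mul_measure_sampleEvent (hJ : ∀ t, Measurable (J t))
    (hindep : iIndepFun J μ) (hlaw : ∀ t i, μ {x | J t x = i} = w i)
    (hii : Set.InjOn ii (Set.Iio n)) :
    ∑' t : ℕ, (t : ℝ≥0∞) * μ (sampleEvent J ii n t) =
      (∑ k ∈ range n, (1 - ∑ m ∈ range k, w (ii m))⁻¹) *
        ∑' t, μ (sampleEvent J ii n t) := by
  induction n with
  | zero =>
    refine (ENNReal.tsum_eq_zero.2 fun t => ?_).trans (by simp)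
    rcases eq_or_ne t 0 with rfl | ht
    · simp
    · simp [sampleEvent_zero, ht.symm]
  | succ n ih =>
    have h0 : μ (sampleEvent J ii (n + 1) 0) = 0 := by
      rw [sampleEvent_succ_zero J hii, measure_empty]
    have hrec := measure_sampleEvent_succ_succ hJ hindep hlaw hii
    rw [tsum_natCast_mul_eq_of_geometric_delay (p := (μ <| sampleEvent J ii n ·)) h0 hrec,
      tsum_eq_of_geometric_delay (p := (μ <| sampleEvent J ii n ·))
        (q := (μ <| sampleEvent J ii (n + 1) ·)) h0 hrec,
      ih (hii.mono (Set.Iio_subset_Iio n.le_succ)), sum_range_succ]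
    ring

theorem setLIntegral_hitTime (hJ : ∀ t, Measurable (J t)) (hindep : iIndepFun J μ)
    (hlaw : ∀ t i, μ {x | J t x = i} = w i) (hii : Set.InjOn ii (Set.Iio n)) :
    ∫⁻ x in {x | ∀ k < n, sampleWOR N (fun s => J s x) k = ii k},
        (hitTime N (fun s => J s x) n : ℝ≥0∞) ∂μ =
      (∑ k ∈ range n, (1 - ∑ m ∈ range k, w (ii m))⁻¹) *
        μ {x | ∀ k < n, sampleWOR N (fun s => J s x) k = ii k} := by
  have hmeas : ∀ t, MeasurableSet (sampleEvent J ii n t) := fun t =>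
    iSup_comap_le hJ _ _ (measurableSet_sampleEvent J hii le_rfl)
  rw [← iUnion_sampleEvent, lintegral_iUnion hmeas (pairwiseDisjoint_sampleEvent J),
    measure_iUnion (pairwiseDisjoint_sampleEvent J) hmeas,
    ← tsum_natCast_mul_measure_sampleEvent hJ hindep hlaw hii]
  refine tsum_congr fun t => ?_
  rw [setLIntegral_congr_fun (g := fun _ => (t : ℝ≥0∞)) (hmeas t)
    fun x hx => congrArg Nat.cast hx.2, setLIntegral_const]

theorem ENNReal.toReal_inv_one_sub_ofReal {a : ℝ} (ha : 0 ≤ a) (ha1 : a ≤ 1) :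
    ((1 - ENNReal.ofReal a)⁻¹).toReal = 1 / (1 - a) := by
  rw [ENNReal.toReal_inv, ENNReal.toReal_sub_of_le (ENNReal.ofReal_le_one.2 ha1) one_ne_top,
    ENNReal.toReal_one, ENNReal.toReal_ofReal ha, one_div]

theorem setIntegral_hitTime {ω : Fin N → ℝ} (hω : ∀ i, 0 < ω i) (hsum : ∑ i, ω i = 1)
    (hJ : ∀ t, Measurable (J t)) (hindep : iIndepFun J μ)
    (hlaw : ∀ t i, μ {x | J t x = i} = ENNReal.ofReal (ω i)) (hii : Set.InjOn ii (Set.Iio n)) :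
    ∫ x in {x | ∀ k < n, sampleWOR N (fun s => J s x) k = ii k},
        (hitTime N (fun s => J s x) n : ℝ) ∂μ =
      (∑ k ∈ range n, 1 / (1 - ∑ m ∈ range k, ω (ii m))) *
        (μ {x | ∀ k < n, sampleWOR N (fun s => J s x) k = ii k}).toReal := by
  have hσ : ∀ k ∈ range n, ENNReal.ofReal (∑ m ∈ range k, ω (ii m)) < 1 := fun k hk => by
    rw [ENNReal.ofReal_sum_of_nonneg fun m _ => (hω _).le]
    refine ENNReal.sum_range_lt_one_of_injOn (fun a => (ENNReal.ofReal_pos.2 (hω a)).ne') ?_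
      (hii.mono (Set.Iio_subset_Iio (mem_range.1 hk)))
    rw [← ENNReal.ofReal_sum_of_nonneg fun a _ => (hω a).le, hsum, ENNReal.ofReal_one]
  have hT : Measurable fun x => (hitTime N (fun s => J s x) n : ℝ) :=
    (measurable_of_countable _).comp ((measurable_hitTime n).comp (measurable_pi_lambda _ hJ))
  rw [integral_eq_lintegral_of_nonneg_ae (ae_of_all _ fun x => Nat.cast_nonneg _)
    hT.aestronglyMeasurable]
  simp_rw [ENNReal.ofReal_natCast, setLIntegral_hitTime hJ hindep hlaw hii,
    ← ENNReal.ofReal_sum_of_nonneg fun m _ => (hω (ii m)).le]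
  rw [ENNReal.toReal_mul, ENNReal.toReal_sum fun k hk =>
    ENNReal.inv_ne_top.2 (tsub_pos_of_lt (hσ k hk)).ne']
  refine congrArg (· * _) (sum_congr rfl fun k hk => ?_)
  exact ENNReal.toReal_inv_one_sub_ofReal (sum_nonneg fun m _ => (hω _).le)
    (ENNReal.ofReal_le_one.1 (hσ k hk).le)

end Main

theorem Fin.sum_Iio_val_eq_sum_range {M : Type*} [AddCommMonoid M] {n : ℕ} (f : ℕ → M)
    (k : Fin n) : ∑ m ∈ Iio k, f m = ∑ m ∈ range k, f m := by
  rw [← Nat.Iio_eq_range, ← Fin.map_valEmbedding_Iio, sum_map]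
  rfl

theorem condExp_hitTime_general
    {Ω : Type*} [MeasurableSpace Ω] (μ : Measure Ω)
    (N n : ℕ) (ω : Fin N → ℝ)
    (hω : ∀ i, 0 < ω i) (hsum : ∑ i, ω i = 1)
    (J : ℕ → Ω → Fin N) (hJmeas : ∀ t, Measurable (J t))
    (hindep : iIndepFun J μ)
    (hlaw : ∀ t i, μ {x | J t x = i} = ENNReal.ofReal (ω i))
    (i : Fin n → Fin N) (hi : Function.Injective i) :
    ∫ x in {x | ∀ k : Fin n, sampleWOR N (fun s => J s x) (k : ℕ) = i k},
        (hitTime N (fun s => J s x) n : ℝ) ∂μ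
      = (∑ k : Fin n, 1 / (1 - ∑ m ∈ Finset.Iio k, ω (i m))) *
          (μ {x | ∀ k : Fin n, sampleWOR N (fun s => J s x) (k : ℕ) = i k}).toReal := by
  obtain _ | n := n
  · simp [hitTime_zero]
  set ii : ℕ → Fin N := fun k => if h : k < n + 1 then i ⟨k, h⟩ else i 0
  have hii_val : ∀ k : Fin (n + 1), ii k = i k := fun k => dif_pos k.isLt
  have hii : Set.InjOn ii (Set.Iio (n + 1)) := fun a ha b hb hab => by
    simpa using congrArg Fin.val (hi (hii_val ⟨a, ha⟩ ▸ hii_val ⟨b, hb⟩ ▸ hab))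
  have hset : {x | ∀ k : Fin (n + 1), sampleWOR N (fun s => J s x) k = i k} =
      {x | ∀ k < n + 1, sampleWOR N (fun s => J s x) k = ii k} := by
    ext x
    simp only [Set.mem_ofPred_eq, ← hii_val]
    exact ⟨fun h k hk => h ⟨k, hk⟩, fun h k => h k k.isLt⟩
  rw [hset, setIntegral_hitTime hω hsum hJmeas hindep hlaw hii, ← Fin.sum_univ_eq_sum_range]
  simp only [← hii_val, Fin.sum_Iio_val_eq_sum_range (fun m => ω (ii m))]

/-- `E[T_n | I₁,…,Iₙ] = ∑_{k=1}^n 1/(1-σ_{k-1})`, stated as an identity of integrals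
over each atom `{(I₁,…,Iₙ) = (i₁,…,iₙ)}` of the conditioning σ-algebra. -/
theorem condExp_hitTime
    {Ω : Type*} [MeasurableSpace Ω] (μ : Measure Ω) [IsProbabilityMeasure μ]
    (N n : ℕ) (hn : n ≤ N) (ω : Fin N → ℝ)
    (hω : ∀ i, 0 < ω i) (hsum : ∑ i, ω i = 1)
    (J : ℕ → Ω → Fin N) (hJmeas : ∀ t, Measurable (J t))
    (hindep : iIndepFun J μ)
    (hlaw : ∀ t i, μ {x | J t x = i} = ENNReal.ofReal (ω i))
    (i : Fin n → Fin N) (hi : Function.Injective i) :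
    ∫ x in {x | ∀ k : Fin n, sampleWOR N (fun s => J s x) (k : ℕ) = i k},
        (hitTime N (fun s => J s x) n : ℝ) ∂μ
      = (∑ k : Fin n, 1 / (1 - ∑ m ∈ Finset.Iio k, ω (i m))) *
          (μ {x | ∀ k : Fin n, sampleWOR N (fun s => J s x) (k : ℕ) = i k}).toReal :=
  condExp_hitTime_general μ N n ω hω hsum J hJmeas hindep hlaw i hi
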